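/- Let (M,g) be a closed Riemannian manifold and f_0, f_1, f_2, f_3, f_4 ∈ C^∞(M). Then ∫_M f_0 ⟨R, df_1 ⊗ df_2 ⊗ df_3 ⊗ df_4⟩ dvol = ∫_M [ (−⟨∇f_0,∇f_1⟩ + f_0Δf_1)·Hess_{f_3}(∇f_2,∇f_4) − f_0⟨Hess_{f_3}(∇f_2,·), Hess_{f_4}(∇f_1,·)⟩ ] dvol − ∫_M [ (−⟨∇f_0,∇f_2⟩ + f_0Δf_2)·Hess_{f_3}(∇f_1,∇f_4) − f_0⟨Hess_{f_3}(∇f_1,·), Hess_{f_4}(∇f_2,·)⟩ ] dvol − ∫_M f_0 Hess_{f_3}([∇f_1,∇f_2], ∇f_4) dvol, where R is the (0,4) Riemann curvature tensor and Δ = −div∘grad. -/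
import Mathlib


/-!
Algebraic model of (a parallelizable patch of) a Riemannian manifold:
`F` is the commutative ℝ-algebra of smooth functions, `V` the `F`-module of smooth
vector fields, `act X f = Xf` the derivative of `f` along `X`, `inner` the Riemannian
metric `⟨·,·⟩`, `bracket` the Lie bracket, `nabla` the Levi-Civita connection
(characterized by the listed axioms: tensoriality, Leibniz rule, torsion-freeness and
metric compatibility), and `e` a global orthonormal frame.
-/
structure RiemannianFrame (n : ℕ) (F V : Type*) [CommRing F] [Algebra ℝ F]
    [AddCommGroup V] [Module F V] where
  /-- derivation of a function along a vector field -/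
  act : V → F → F
  act_add_right : ∀ X f g, act X (f + g) = act X f + act X g
  act_mul_right : ∀ X f g, act X (f * g) = f * act X g + g * act X f
  act_algebraMap : ∀ X r, act X (algebraMap ℝ F r) = 0
  act_add_left : ∀ X Y f, act (X + Y) f = act X f + act Y f
  act_smul_left : ∀ (f : F) X g, act (f • X) g = f * act X g
  /-- the Riemannian metric -/
  inner : V → V → F
  inner_symm : ∀ X Y, inner X Y = inner Y X
  inner_add_left : ∀ X Y Z, inner (X + Y) Z = inner X Z + inner Y Z
  inner_smul_left : ∀ (f : F) X Y, inner (f • X) Y = f * inner X Y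
  /-- the Lie bracket of vector fields -/
  bracket : V → V → V
  bracket_act : ∀ X Y f, act (bracket X Y) f = act X (act Y f) - act Y (act X f)
  bracket_jacobi : ∀ X Y Z,
    bracket X (bracket Y Z) + bracket Y (bracket Z X) + bracket Z (bracket X Y) = 0
  /-- the Levi-Civita connection -/
  nabla : V → V → V
  nabla_add_left : ∀ X Y Z, nabla (X + Y) Z = nabla X Z + nabla Y Z
  nabla_smul_left : ∀ (f : F) X Y, nabla (f • X) Y = f • nabla X Y
  nabla_add_right : ∀ X Y Z, nabla X (Y + Z) = nabla X Y + nabla X Z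
  nabla_smul_right : ∀ X (f : F) Y, nabla X (f • Y) = act X f • Y + f • nabla X Y
  torsion_free : ∀ X Y, nabla X Y - nabla Y X = bracket X Y
  metric_compat : ∀ X Y Z, act X (inner Y Z) = inner (nabla X Y) Z + inner Y (nabla X Z)
  /-- a global orthonormal frame -/
  e : Fin n → V
  e_orthonormal : ∀ i j, inner (e i) (e j) = if i = j then 1 else 0
  e_span : ∀ X : V, X = ∑ i, inner X (e i) • e i

namespace RiemannianFrame

variable {n : ℕ} {F V : Type*} [CommRing F] [Algebra ℝ F] [AddCommGroup V] [Module F V]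
variable (S : RiemannianFrame n F V)

/-- the gradient vector field `∇f` -/
def grad (f : F) : V := ∑ i, S.act (S.e i) f • S.e i

/-- the Hessian `Hess f (X, Y) = ⟨∇_X ∇f, Y⟩` -/
def hess (f : F) (X Y : V) : F := S.inner (S.nabla X (S.grad f)) Y

/-- the geometer's Laplacian `Δ = −div ∘ grad = −tr Hess` -/
def lap (f : F) : F := -∑ i, S.hess f (S.e i) (S.e i)

/-- the Riemann curvature operator `R(X,Y)Z = ∇_X∇_Y Z − ∇_Y∇_X Z − ∇_{[X,Y]}Z` -/
def curv (X Y Z : V) : V :=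
  S.nabla X (S.nabla Y Z) - S.nabla Y (S.nabla X Z) - S.nabla (S.bracket X Y) Z

/-- the Ricci curvature `Ric(X,Y) = Σᵢ ⟨R(eᵢ,X)Y, eᵢ⟩` -/
def ric (X Y : V) : F := ∑ i, S.inner (S.curv (S.e i) X Y) (S.e i)

/-- the divergence of a vector field -/
def divergence (X : V) : F := ∑ i, S.inner (S.nabla (S.e i) X) (S.e i)

/-- the codifferential `δω` of the one-form `ω = W♭` (one-forms are identified with
vector fields via the metric): `δω = −div W` -/
def codiff (W : V) : F := -S.divergence W

/-- the exterior derivative `dω` of the one-form `ω = W♭`: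
`dω(X,Y) = Xω(Y) − Yω(X) − ω([X,Y]) = ⟨∇_X W, Y⟩ − ⟨∇_Y W, X⟩` -/
def dform (W X Y : V) : F := S.inner (S.nabla X W) Y - S.inner (S.nabla Y W) X

/-- the codifferential of a 2-form: `δα(Z) = −Σᵢ (∇_{eᵢ}α)(eᵢ, Z)` -/
def codiffTwo (α : V → V → F) (Z : V) : F :=
  -∑ i, (S.act (S.e i) (α (S.e i) Z) - α (S.nabla (S.e i) (S.e i)) Z
      - α (S.e i) (S.nabla (S.e i) Z))

/-- the Hodge Laplacian `Δ_H ω = d(δω) + δ(dω)` of the one-form `ω = W♭`, evaluated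
on the vector field `Z` (note `d(δω)(Z) = Z(δω)`) -/
def hodgeLap (W Z : V) : F := S.act Z (S.codiff W) + S.codiffTwo (S.dform W) Z

/-- the connection (rough) Laplacian `∇*∇` on one-forms, computed via the metric duality
on vector fields: `∇*∇W = −Σᵢ (∇_{eᵢ}∇_{eᵢ}W − ∇_{∇_{eᵢ}eᵢ}W)` -/
def roughLap (W : V) : V :=
  -∑ i, (S.nabla (S.e i) (S.nabla (S.e i) W) - S.nabla (S.nabla (S.e i) (S.e i)) W)

end RiemannianFrame


namespace RiemannianFrame

variable {n : ℕ} {F V : Type*} [CommRing F] [Algebra ℝ F] [AddCommGroup V] [Module F V]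
variable (S : RiemannianFrame n F V)

lemma act_zero_left (g : F) : S.act 0 g = 0 := by
  have h := S.act_smul_left 0 0 g
  simpa using h

lemma act_sum_left {ι : Type*} (s : Finset ι) (X : ι → V) (g : F) :
    S.act (∑ i ∈ s, X i) g = ∑ i ∈ s, S.act (X i) g := by
  induction s using Finset.cons_induction with
  | empty => simpa using S.act_zero_left g
  | cons a s ha ih => rw [Finset.sum_cons, S.act_add_left, ih, Finset.sum_cons]

lemma inner_smul_right' (f : F) (X Y : V) : S.inner X (f • Y) = f * S.inner X Y := by
  rw [S.inner_symm, S.inner_smul_left, S.inner_symm]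

lemma inner_neg_left (X Y : V) : S.inner (-X) Y = -S.inner X Y := by
  have h := S.inner_smul_left (-1) X Y
  simpa using h

lemma inner_sub_left (X Y Z : V) : S.inner (X - Y) Z = S.inner X Z - S.inner Y Z := by
  rw [sub_eq_add_neg, S.inner_add_left, S.inner_neg_left, sub_eq_add_neg]

lemma inner_zero_left (X : V) : S.inner 0 X = 0 := by
  have h := S.inner_smul_left 0 0 X
  simpa using h

lemma inner_sum_right {ι : Type*} (s : Finset ι) (X : V) (Y : ι → V) :
    S.inner X (∑ i ∈ s, Y i) = ∑ i ∈ s, S.inner X (Y i) := by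
  induction s using Finset.cons_induction with
  | empty =>
      simp only [Finset.sum_empty]
      rw [S.inner_symm]; exact S.inner_zero_left X
  | cons a s ha ih =>
      rw [Finset.sum_cons, S.inner_symm, S.inner_add_left, S.inner_symm (Y a),
        S.inner_symm (∑ i ∈ s, Y i), ih, Finset.sum_cons]

lemma act_expand (X : V) (g : F) :
    S.act X g = ∑ i, S.inner X (S.e i) * S.act (S.e i) g := by
  conv_lhs => rw [S.e_span X]
  rw [S.act_sum_left]
  exact Finset.sum_congr rfl fun i _ => S.act_smul_left _ _ _

lemma act_eq_inner_grad (X : V) (f : F) : S.act X f = S.inner X (S.grad f) := by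
  rw [S.act_expand, grad, S.inner_sum_right]
  exact Finset.sum_congr rfl fun i _ => by rw [S.inner_smul_right', mul_comm]

lemma lap_eq (f : F) : S.lap f = -S.divergence (S.grad f) := rfl

lemma divergence_smul (g : F) (X : V) :
    S.divergence (g • X) = S.act X g + g * S.divergence X := by
  simp only [divergence, S.nabla_smul_right, S.inner_add_left, S.inner_smul_left,
    Finset.sum_add_distrib, ← Finset.mul_sum]
  congr 1
  rw [S.act_expand X g]
  exact Finset.sum_congr rfl fun i _ => by rw [S.inner_symm, mul_comm]

/-- integration by parts for `∫ f₀ · (∇f₁) h` -/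
lemma ibp (I : F →ₗ[ℝ] ℝ) (hdiv : ∀ X : V, I (S.divergence X) = 0) (f₀ f₁ h : F) :
    I (f₀ * S.act (S.grad f₁) h) =
      I ((-(S.inner (S.grad f₀) (S.grad f₁)) + f₀ * S.lap f₁) * h) := by
  have key : f₀ * S.act (S.grad f₁) h =
      (-(S.inner (S.grad f₀) (S.grad f₁)) + f₀ * S.lap f₁) * h +
      S.divergence ((f₀ * h) • S.grad f₁) := by
    rw [S.divergence_smul, S.act_mul_right,
      S.act_eq_inner_grad (S.grad f₁) f₀, S.inner_symm,
      show S.divergence (S.grad f₁) = -S.lap f₁ by rw [S.lap_eq, neg_neg]]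
    ring
  rw [key, map_add, hdiv, add_zero]

end RiemannianFrame

/-- **Integral characterization of the Riemann curvature tensor** (formula (riem)): on a
closed Riemannian manifold `M` with integral functional `I = ∫_M · dvol` (an ℝ-linear
functional satisfying the divergence theorem `∫_M div X dvol = 0`), for all smooth
functions `f₀, …, f₄`,
`∫ f₀ ⟨R, df₁⊗df₂⊗df₃⊗df₄⟩
  = ∫ [(−⟨∇f₀,∇f₁⟩ + f₀Δf₁)·Hess_{f₃}(∇f₂,∇f₄) − f₀⟨Hess_{f₃}(∇f₂,·), Hess_{f₄}(∇f₁,·)⟩]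
  − ∫ [(−⟨∇f₀,∇f₂⟩ + f₀Δf₂)·Hess_{f₃}(∇f₁,∇f₄) − f₀⟨Hess_{f₃}(∇f₁,·), Hess_{f₄}(∇f₂,·)⟩]
  − ∫ f₀ Hess_{f₃}([∇f₁,∇f₂], ∇f₄)`,
where `⟨R, df₁⊗df₂⊗df₃⊗df₄⟩ = ⟨R(∇f₁,∇f₂)∇f₃, ∇f₄⟩`, `Δ = −div∘grad`, and
`⟨Hess_{f₃}(∇f₂,·), Hess_{f₄}(∇f₁,·)⟩ = ⟨∇_{∇f₂}∇f₃, ∇_{∇f₁}∇f₄⟩`. -/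
theorem integral_riemann_identity {n : ℕ} {F V : Type*} [CommRing F] [Algebra ℝ F]
    [AddCommGroup V] [Module F V] (S : RiemannianFrame n F V)
    (I : F →ₗ[ℝ] ℝ) (hdivThm : ∀ X : V, I (S.divergence X) = 0)
    (f₀ f₁ f₂ f₃ f₄ : F) :
    I (f₀ * S.inner (S.curv (S.grad f₁) (S.grad f₂) (S.grad f₃)) (S.grad f₄)) =
      I ((-(S.inner (S.grad f₀) (S.grad f₁)) + f₀ * S.lap f₁)
            * S.hess f₃ (S.grad f₂) (S.grad f₄)
          - f₀ * S.inner (S.nabla (S.grad f₂) (S.grad f₃)) (S.nabla (S.grad f₁) (S.grad f₄)))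
      - I ((-(S.inner (S.grad f₀) (S.grad f₂)) + f₀ * S.lap f₂)
            * S.hess f₃ (S.grad f₁) (S.grad f₄)
          - f₀ * S.inner (S.nabla (S.grad f₁) (S.grad f₃)) (S.nabla (S.grad f₂) (S.grad f₄)))
      - I (f₀ * S.hess f₃ (S.bracket (S.grad f₁) (S.grad f₂)) (S.grad f₄)) := by
  have h2 : f₀ * S.inner (S.curv (S.grad f₁) (S.grad f₂) (S.grad f₃)) (S.grad f₄) =
      (f₀ * S.act (S.grad f₁) (S.hess f₃ (S.grad f₂) (S.grad f₄))
        - f₀ * S.inner (S.nabla (S.grad f₂) (S.grad f₃)) (S.nabla (S.grad f₁) (S.grad f₄)))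
      - (f₀ * S.act (S.grad f₂) (S.hess f₃ (S.grad f₁) (S.grad f₄))
        - f₀ * S.inner (S.nabla (S.grad f₁) (S.grad f₃)) (S.nabla (S.grad f₂) (S.grad f₄)))
      - f₀ * S.hess f₃ (S.bracket (S.grad f₁) (S.grad f₂)) (S.grad f₄) := by
    have mcX := S.metric_compat (S.grad f₁) (S.nabla (S.grad f₂) (S.grad f₃)) (S.grad f₄)
    have mcY := S.metric_compat (S.grad f₂) (S.nabla (S.grad f₁) (S.grad f₃)) (S.grad f₄)
    simp only [RiemannianFrame.curv, RiemannianFrame.hess, S.inner_sub_left]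
    linear_combination -f₀ * mcX + f₀ * mcY
  rw [h2]
  simp only [map_sub]
  rw [S.ibp I hdivThm f₀ f₁, S.ibp I hdivThm f₀ f₂]
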